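/- Let n ≥ 1 be a natural number and g ≥ 0 a real number. Let a, b : ℕ → ℝ be sequences and k, k' ∈ {1, …, n} be break points such that: a_{i+1} − a_i = g for all 1 ≤ i ≤ k−1, and a_{i+1} − a_i = −g for all k+1 ≤ i ≤ n−1 (the increment a_{k+1} − a_k may be arbitrary); and analogously b_{i+1} − b_i = g for all 1 ≤ i ≤ k'−1, and b_{i+1} − b_i = −g for all k'+1 ≤ i ≤ n−1 (the increment b_{k'+1} − b_{k'} may be arbitrary). Then the maximum of the sequence a_i − b_i over i ∈ {1, …, n} is attained at one of at most four positions: there exists an index i* ∈ {k, k+1, k', k'+1} ∩ {1, …, n} such that a_j − b_j ≤ a_{i*} − b_{i*} for all j ∈ {1, …, n}. -/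

import Mathlib

/-!
Write `c = a - b`. Below `min k k'` both sequences rise by `g` and above `max k k'` both fall
by `g`, so `c` is constant on these two blocks; in between one sequence rises while the other
falls, so there `c` moves in steps of `2g` or `-2g`. A function on three consecutive blocks that
is nondecreasing on the first, monotone or antitone on the second and nonincreasing on the third is
dominated by its values at the two inner block boundaries, i.e. at
`min k k', min k k' + 1, max k k', max k k' + 1`, which are the four candidate positions.
-/

theorem Finset.exists_max_of_forall_exists_le {ι β : Type*} [LinearOrder β] {S : Finset ι}
    {T : Set ι} {f : ι → β} (hS : S.Nonempty) (h : ∀ j ∈ T, ∃ p ∈ S, f j ≤ f p) :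
    ∃ i ∈ S, ∀ j ∈ T, f j ≤ f i := by
  obtain ⟨i, hi, hmax⟩ := S.exists_max_image f hS
  refine ⟨i, hi, fun j hj => ?_⟩
  obtain ⟨p, hp, hjp⟩ := h j hj
  exact hjp.trans (hmax p hp)

section Nat

variable {β : Type*} [Preorder β] {f : ℕ → β} {s t : ℕ}

theorem monotoneOn_Icc_of_le_add_one (h : ∀ i, s ≤ i → i + 1 ≤ t → f i ≤ f (i + 1)) :
    MonotoneOn f (Set.Icc s t) :=
  monotoneOn_of_le_succ Set.ordConnected_Icc fun i _ hi hi' => h i hi.1 hi'.2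

theorem antitoneOn_Icc_of_add_one_le (h : ∀ i, s ≤ i → i + 1 ≤ t → f (i + 1) ≤ f i) :
    AntitoneOn f (Set.Icc s t) :=
  antitoneOn_of_succ_le Set.ordConnected_Icc fun i _ hi hi' => h i hi.1 hi'.2

theorem exists_le_of_monotoneOn_of_antitoneOn {m M n j : ℕ}
    (hsm : s ≤ m) (hmM : m ≤ M) (hMn : M ≤ n)
    (hlow : MonotoneOn f (Set.Icc s m))
    (hmid : MonotoneOn f (Set.Icc (m + 1) M) ∨ AntitoneOn f (Set.Icc (m + 1) M))
    (hhigh : AntitoneOn f (Set.Icc (M + 1) n)) (hj : j ∈ Finset.Icc s n) :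
    ∃ p ∈ ({m, m + 1, M, M + 1} : Finset ℕ) ∩ Finset.Icc s n, f j ≤ f p := by
  simp only [Finset.mem_Icc] at hj
  simp only [Finset.mem_inter, Finset.mem_insert, Finset.mem_singleton, Finset.mem_Icc]
  by_cases hjm : j ≤ m
  · exact ⟨m, by omega, hlow ⟨hj.1, hjm⟩ ⟨hsm, le_rfl⟩ hjm⟩
  by_cases hjM : j ≤ M
  · have hjI : j ∈ Set.Icc (m + 1) M := ⟨by omega, hjM⟩
    rcases hmid with hmono | hanti
    · exact ⟨M, by omega, hmono hjI ⟨by omega, le_rfl⟩ hjM⟩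
    · exact ⟨m + 1, by omega, hanti ⟨le_rfl, by omega⟩ hjI hjI.1⟩
  · exact ⟨M + 1, by omega, hhigh ⟨le_rfl, by omega⟩ ⟨by omega, hj.2⟩ (by omega)⟩

end Nat

section PiecewiseArithmetic

variable {n k k' : ℕ} {g : ℝ} {a b : ℕ → ℝ}

theorem monotoneOn_sub_Icc_one_min
    (ha1 : ∀ i, 1 ≤ i → i + 1 ≤ k → a (i + 1) - a i = g)
    (hb1 : ∀ i, 1 ≤ i → i + 1 ≤ k' → b (i + 1) - b i = g) :
    MonotoneOn (a - b) (Set.Icc 1 (min k k')) :=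
  monotoneOn_Icc_of_le_add_one fun i h1 h2 => by
    have := ha1 i h1 (by omega)
    have := hb1 i h1 (by omega)
    simp only [Pi.sub_apply]
    linarith

theorem antitoneOn_sub_Icc_max_add_one
    (ha2 : ∀ i, k + 1 ≤ i → i + 1 ≤ n → a (i + 1) - a i = -g)
    (hb2 : ∀ i, k' + 1 ≤ i → i + 1 ≤ n → b (i + 1) - b i = -g) :
    AntitoneOn (a - b) (Set.Icc (max k k' + 1) n) :=
  antitoneOn_Icc_of_add_one_le fun i h1 h2 => by
    have := ha2 i (by omega) h2
    have := hb2 i (by omega) h2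
    simp only [Pi.sub_apply]
    linarith

theorem monotoneOn_or_antitoneOn_sub_Icc_min_max (hg : 0 ≤ g) (hkn : k ≤ n) (hk'n : k' ≤ n)
    (ha1 : ∀ i, 1 ≤ i → i + 1 ≤ k → a (i + 1) - a i = g)
    (ha2 : ∀ i, k + 1 ≤ i → i + 1 ≤ n → a (i + 1) - a i = -g)
    (hb1 : ∀ i, 1 ≤ i → i + 1 ≤ k' → b (i + 1) - b i = g)
    (hb2 : ∀ i, k' + 1 ≤ i → i + 1 ≤ n → b (i + 1) - b i = -g) :
    MonotoneOn (a - b) (Set.Icc (min k k' + 1) (max k k')) ∨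
      AntitoneOn (a - b) (Set.Icc (min k k' + 1) (max k k')) := by
  rcases le_total k k' with hkk' | hk'k
  · right
    refine antitoneOn_Icc_of_add_one_le fun i h1 h2 => ?_
    have := ha2 i (by omega) (by omega)
    have := hb1 i (by omega) (by omega)
    simp only [Pi.sub_apply]
    linarith
  · left
    refine monotoneOn_Icc_of_le_add_one fun i h1 h2 => ?_
    have := ha1 i (by omega) (by omega)
    have := hb2 i (by omega) (by omega)
    simp only [Pi.sub_apply]
    linarith

end PiecewiseArithmetic

theorem Finset.insert_min_max_eq (k k' : ℕ) :
    ({min k k', min k k' + 1, max k k', max k k' + 1} : Finset ℕ) = {k, k + 1, k', k' + 1} := by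
  rcases le_total k k' with h | h
  · simp [h]
  · simp only [min_eq_right h, max_eq_left h]
    ext; simp only [Finset.mem_insert, Finset.mem_singleton]; tauto

theorem max_of_diff_of_piecewise_arithmetic_general
    (n : ℕ) (g : ℝ) (hg : 0 ≤ g)
    (a b : ℕ → ℝ) (k k' : ℕ)
    (hk : k ∈ Finset.Icc 1 n) (hk' : k' ∈ Finset.Icc 1 n)
    (ha1 : ∀ i, 1 ≤ i → i + 1 ≤ k → a (i + 1) - a i = g)
    (ha2 : ∀ i, k + 1 ≤ i → i + 1 ≤ n → a (i + 1) - a i = -g)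
    (hb1 : ∀ i, 1 ≤ i → i + 1 ≤ k' → b (i + 1) - b i = g)
    (hb2 : ∀ i, k' + 1 ≤ i → i + 1 ≤ n → b (i + 1) - b i = -g) :
    ∃ i ∈ ({k, k + 1, k', k' + 1} : Finset ℕ) ∩ Finset.Icc 1 n,
      ∀ j ∈ Finset.Icc 1 n, a j - b j ≤ a i - b i := by
  rw [Finset.mem_Icc] at hk hk'
  rw [← Finset.insert_min_max_eq]
  refine Finset.exists_max_of_forall_exists_le (f := a - b)
    ⟨min k k', Finset.mem_inter.2 ⟨Finset.mem_insert_self _ _, Finset.mem_Icc.2 (by omega)⟩⟩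
    fun j hj => exists_le_of_monotoneOn_of_antitoneOn (by omega) min_le_max (by omega)
      (monotoneOn_sub_Icc_one_min ha1 hb1)
      (monotoneOn_or_antitoneOn_sub_Icc_min_max hg hk.2 hk'.2 ha1 ha2 hb1 hb2)
      (antitoneOn_sub_Icc_max_add_one ha2 hb2) hj

/-- Lemma 6.1: for two sequences that are arithmetic with common difference `g`
up to a break point (`k` resp. `k'`) and common difference `-g` afterwards
(the increment at the break point being arbitrary), the maximum of their
difference over `{1, …, n}` is attained at one of the at most four positions
`k, k+1, k', k'+1`. -/
theorem max_of_diff_of_piecewise_arithmetic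
    (n : ℕ) (hn : 1 ≤ n) (g : ℝ) (hg : 0 ≤ g)
    (a b : ℕ → ℝ) (k k' : ℕ)
    (hk : k ∈ Finset.Icc 1 n) (hk' : k' ∈ Finset.Icc 1 n)
    (ha1 : ∀ i, 1 ≤ i → i + 1 ≤ k → a (i + 1) - a i = g)
    (ha2 : ∀ i, k + 1 ≤ i → i + 1 ≤ n → a (i + 1) - a i = -g)
    (hb1 : ∀ i, 1 ≤ i → i + 1 ≤ k' → b (i + 1) - b i = g)
    (hb2 : ∀ i, k' + 1 ≤ i → i + 1 ≤ n → b (i + 1) - b i = -g) :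
    ∃ i ∈ ({k, k + 1, k', k' + 1} : Finset ℕ) ∩ Finset.Icc 1 n,
      ∀ j ∈ Finset.Icc 1 n, a j - b j ≤ a i - b i :=
  max_of_diff_of_piecewise_arithmetic_general n g hg a b k k' hk hk' ha1 ha2 hb1 hb2
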